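/- arXiv:2308.02755 — 4 statements merged into one kernel-verified Lean document; each statement's English description precedes it below -/
import Mathlib

section
/- Let A be a real n×n matrix and suppose there exist a switching matrix Θ and a permutation matrix P such that A' = ΘPAPᵀΘ is either eventually positive, or entrywise nonnegative and irreducible. Then there exists a vector v' ∈ ℝⁿ with all entries strictly positive such that A'v' = ρ(A)v', and the vector v := PᵀΘv' (which has all entries nonzero) is an eigenvector of A for the eigenvalue ρ(A): Av = ρ(A)v. -/
open Matrix Polynomial

/-- The spectrum of a real square matrix: the multiset of complex roots of its
characteristic polynomial. -/
noncomputable def spectrumM {m : Type*} [Fintype m] [DecidableEq m]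
    (A : Matrix m m ℝ) : Multiset ℂ :=
  ((A.map Complex.ofReal).charpoly).roots

/-- The spectral radius: the maximum modulus of the eigenvalues. -/
noncomputable def specRadius {m : Type*} [Fintype m] [DecidableEq m]
    (A : Matrix m m ℝ) : ℝ :=
  sSup {r : ℝ | ∃ z ∈ spectrumM A, ‖z‖ = r}

/-- A switching matrix: diagonal with ±1 entries. -/
def IsSwitching {n : ℕ} (Θ : Matrix (Fin n) (Fin n) ℝ) : Prop :=
  ∃ θ : Fin n → ℝ, (∀ i, θ i = 1 ∨ θ i = -1) ∧ Θ = Matrix.diagonal θ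

/-- A permutation matrix. -/
def IsPermMatrix {n : ℕ} (P : Matrix (Fin n) (Fin n) ℝ) : Prop :=
  ∃ σ : Equiv.Perm (Fin n), P = Matrix.of fun i j => if σ j = i then 1 else 0

/-- Eventually positive matrix: all entries of all high enough powers are positive. -/
def EventuallyPositive {n : ℕ} (B : Matrix (Fin n) (Fin n) ℝ) : Prop :=
  ∃ k₀ : ℕ, ∀ k : ℕ, k₀ ≤ k → ∀ i j, 0 < (B ^ k) i j

/-- Entrywise nonnegative and irreducible matrix. -/
def IrreducibleNonneg {n : ℕ} (B : Matrix (Fin n) (Fin n) ℝ) : Prop :=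
  (∀ i j, 0 ≤ B i j) ∧ ∀ i j, ∃ k : ℕ, 0 < k ∧ 0 < (B ^ k) i j

/-! Conjugation by the signed permutation `ΘP`, whose inverse is `PᵀΘ`, preserves the
characteristic polynomial, so it suffices to find a positive eigenvector of `B = ΘPAPᵀΘ` for
`ρ(B)`. In both cases `B` commutes with an entrywise positive matrix `M` (a power of `B`, resp.
`∑_{k ≤ N} Bᵏ`). A maximiser `z` of the Collatz–Wielandt function `y ↦ minᵢ (By)ᵢ / yᵢ` on the
compact set `M(Δ)` of positive vectors satisfies `Bz = rz`: otherwise `Bz - rz ≥ 0` is nonzero,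
and `M(Bz - rz) > 0` says that the function is strictly larger at `Mz`. Finally some odd power
`Bᵐ` is entrywise nonnegative (`B` itself, resp. `B^(2k+1)`); comparing at an index maximising
`|xᵢ| / zᵢ` shows that every eigenvalue of `Bᵐ` has modulus at most `rᵐ`, which forces `r ≥ 0`
and `r = ρ(B)`. -/

variable {ι : Type*} [Fintype ι]

section Spectrum

variable [DecidableEq ι]

lemma mem_spectrumM_iff {A : Matrix ι ι ℝ} {μ : ℂ} :
    μ ∈ spectrumM A ↔ ∃ x ≠ 0, A.map Complex.ofReal *ᵥ x = μ • x := by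
  rw [spectrumM, mem_roots (charpoly_monic _).ne_zero, ← mem_spectrum_iff_isRoot_charpoly,
    ← spectrum_toLin', ← Module.End.hasEigenvalue_iff_mem_spectrum]
  constructor
  · intro h
    obtain ⟨x, hx⟩ := h.exists_hasEigenvector
    exact ⟨x, hx.2, Module.End.mem_eigenspace_iff.1 hx.1⟩
  · rintro ⟨x, hx, hAx⟩
    exact Module.End.hasEigenvalue_of_hasEigenvector ⟨Module.End.mem_eigenspace_iff.2 hAx, hx⟩

lemma ofReal_mem_spectrumM {A : Matrix ι ι ℝ} {r : ℝ} {z : ι → ℝ} (hz : z ≠ 0)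
    (hAz : A *ᵥ z = r • z) : (r : ℂ) ∈ spectrumM A := by
  refine mem_spectrumM_iff.2 ⟨fun i => z i, fun h => hz (funext fun i => by
    simpa using congrFun h i), funext fun i => ?_⟩
  simpa [mulVec, dotProduct] using congrArg Complex.ofReal (congrFun hAz i)

lemma specRadius_eq_of_forall_norm_le {A : Matrix ι ι ℝ} {r : ℝ} (hr : (r : ℂ) ∈ spectrumM A)
    (hbound : ∀ μ ∈ spectrumM A, ‖μ‖ ≤ r) : specRadius A = r := by
  have hr0 : 0 ≤ r := (norm_nonneg _).trans (hbound _ hr)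
  refine IsGreatest.csSup_eq ⟨⟨r, hr, by simp [abs_of_nonneg hr0]⟩, ?_⟩
  rintro _ ⟨μ, hμ, rfl⟩
  exact hbound μ hμ

lemma specRadius_conj {A Q Q' : Matrix ι ι ℝ} (h : Q' * Q = 1) :
    specRadius (Q * A * Q') = specRadius A := by
  have : (Q * A * Q').charpoly = A.charpoly := by
    rw [mul_assoc, charpoly_mul_comm, mul_assoc, h, mul_one]
  have hmap (M : Matrix ι ι ℝ) :
      (M.map Complex.ofReal).charpoly = M.charpoly.map Complex.ofRealHom :=
    M.charpoly_map Complex.ofRealHom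
  simp only [specRadius, spectrumM, hmap, this]

lemma pow_mulVec_of_mulVec_eq_smul {R : Type*} [CommRing R] {A : Matrix ι ι R} {μ : R}
    {x : ι → R} (h : A *ᵥ x = μ • x) (k : ℕ) : (A ^ k) *ᵥ x = μ ^ k • x := by
  induction k with
  | zero => simp
  | succ k ih => rw [pow_succ', ← mulVec_mulVec, ih, mulVec_smul, h, smul_smul, pow_succ]

end Spectrum

lemma mulVec_pos_of_pos {M : Matrix ι ι ℝ} (hM : ∀ i j, 0 < M i j) {x : ι → ℝ} (hx : 0 ≤ x)
    (hx' : x ≠ 0) (i : ι) : 0 < (M *ᵥ x) i := by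
  obtain ⟨j, hj⟩ : ∃ j, x j ≠ 0 := Function.ne_iff.1 hx'
  exact Finset.sum_pos' (fun k _ => mul_nonneg (hM i k).le (hx k))
    ⟨j, Finset.mem_univ j, mul_pos (hM i j) ((hx j).lt_of_ne' hj)⟩

lemma norm_le_of_nonneg_of_pos_eigenvector {C : Matrix ι ι ℝ} (hC : ∀ i j, 0 ≤ C i j)
    {z : ι → ℝ} (hz : ∀ i, 0 < z i) {s : ℝ} (hCz : C *ᵥ z = s • z) {μ : ℂ} {x : ι → ℂ}
    (hx : x ≠ 0) (hCx : C.map Complex.ofReal *ᵥ x = μ • x) : ‖μ‖ ≤ s := by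
  obtain ⟨j, hj⟩ := Function.ne_iff.1 hx
  obtain ⟨i, -, hi⟩ :=
    Finset.exists_max_image Finset.univ (fun j => ‖x j‖ / z j) ⟨j, Finset.mem_univ j⟩
  set m := ‖x i‖ / z i
  have hxm (j : ι) : ‖x j‖ ≤ m * z j := (div_le_iff₀ (hz j)).1 (hi j (Finset.mem_univ j))
  have hxi_eq : m * z i = ‖x i‖ := div_mul_cancel₀ _ (hz i).ne'
  have hxi : 0 < ‖x i‖ := by
    have hm : 0 < m := pos_of_mul_pos_left ((norm_pos_iff.2 hj).trans_le (hxm j)) (hz j).le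
    exact hxi_eq ▸ mul_pos hm (hz i)
  refine le_of_mul_le_mul_right ?_ hxi
  calc ‖μ‖ * ‖x i‖ = ‖∑ j, (C i j : ℂ) * x j‖ := by
        rw [← norm_mul, ← smul_eq_mul, ← Pi.smul_apply, ← hCx]; rfl
    _ ≤ ∑ j, C i j * (m * z j) := by
        refine (norm_sum_le _ _).trans (Finset.sum_le_sum fun j _ => ?_)
        rw [norm_mul, Complex.norm_real, Real.norm_of_nonneg (hC i j)]
        exact mul_le_mul_of_nonneg_left (hxm j) (hC i j)
    _ = m * (C *ᵥ z) i := by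
        simp only [mulVec, dotProduct, Finset.mul_sum]
        exact Finset.sum_congr rfl fun j _ => by ring
    _ = s * ‖x i‖ := by rw [hCz, Pi.smul_apply, smul_eq_mul, ← hxi_eq]; ring

noncomputable def collatzWielandt [Nonempty ι] (B : Matrix ι ι ℝ) (y : ι → ℝ) : ℝ :=
  Finset.univ.inf' Finset.univ_nonempty fun i => (B *ᵥ y) i / y i

section CollatzWielandt

variable [Nonempty ι] {B : Matrix ι ι ℝ} {y : ι → ℝ}

lemma collatzWielandt_mul_le (hy : ∀ i, 0 < y i) (i : ι) :
    collatzWielandt B y * y i ≤ (B *ᵥ y) i :=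
  (le_div_iff₀ (hy i)).1 (Finset.inf'_le _ (Finset.mem_univ i))

lemma lt_collatzWielandt (hy : ∀ i, 0 < y i) {r : ℝ} (h : ∀ i, r * y i < (B *ᵥ y) i) :
    r < collatzWielandt B y :=
  (Finset.lt_inf'_iff _).2 fun i _ => (lt_div_iff₀ (hy i)).2 (h i)

lemma continuousOn_collatzWielandt {K : Set (ι → ℝ)} (hK : ∀ y ∈ K, ∀ i, 0 < y i) :
    ContinuousOn (collatzWielandt B) K :=
  ContinuousOn.finset_inf'_apply _ fun i _ =>
    ((continuous_apply i).comp (continuous_const.matrix_mulVec continuous_id)).continuousOn.div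
      (continuous_apply i).continuousOn fun y hy => (hK y hy i).ne'

variable [DecidableEq ι]

lemma exists_pos_eigenvector_of_commute_pos {B M : Matrix ι ι ℝ}
    (hM : ∀ i j, 0 < M i j) (hMB : Commute M B) :
    ∃ r : ℝ, ∃ z : ι → ℝ, (∀ i, 0 < z i) ∧ B *ᵥ z = r • z := by
  set K := (M *ᵥ ·) '' stdSimplex ℝ ι
  have hK : ∀ y ∈ K, ∀ i, 0 < y i := by
    rintro _ ⟨x, hx, rfl⟩ i
    refine mulVec_pos_of_pos hM hx.1 (fun h => ?_) i
    simpa [h] using hx.2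
  have hKc : IsCompact K := (isCompact_stdSimplex ℝ ι).image (by fun_prop)
  have hKne : K.Nonempty := ⟨_, _, single_mem_stdSimplex ℝ (Classical.arbitrary ι), rfl⟩
  obtain ⟨z, hzK, hzmax⟩ := hKc.exists_isMaxOn hKne (continuousOn_collatzWielandt (B := B) hK)
  set r := collatzWielandt B z
  have hz := hK z hzK
  refine ⟨r, z, hz, ?_⟩
  by_contra hne
  set w := B *ᵥ z - r • z
  have hw : 0 ≤ w := fun i =>
    sub_nonneg.2 (by simpa [mul_comm] using collatzWielandt_mul_le (B := B) hz i)
  have hw' : w ≠ 0 := sub_ne_zero.2 hne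
  set c := ∑ i, z i
  have hc : 0 < c := Finset.sum_pos (fun i _ => hz i) Finset.univ_nonempty
  have hz' : c⁻¹ • z ∈ stdSimplex ℝ ι :=
    ⟨fun i => by simpa using (mul_pos (inv_pos.2 hc) (hz i)).le,
      by simp [← Finset.mul_sum, c, inv_mul_cancel₀ hc.ne']⟩
  have hlt : r < collatzWielandt B (M *ᵥ (c⁻¹ • z)) := by
    refine lt_collatzWielandt (hK _ ⟨_, hz', rfl⟩) fun i => ?_
    have := mulVec_pos_of_pos hM hw hw' i
    rw [mulVec_sub, mulVec_smul, mulVec_mulVec, hMB.eq, ← mulVec_mulVec] at this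
    simp only [mulVec_smul, Pi.smul_apply, smul_eq_mul, Pi.sub_apply] at this ⊢
    nlinarith [inv_pos.2 hc]
  exact hlt.not_ge (hzmax ⟨_, hz', rfl⟩)

lemma exists_pos_mulVec_eq_specRadius_smul_of_commute_pos {B M : Matrix ι ι ℝ}
    (hM : ∀ i j, 0 < M i j) (hMB : Commute M B) {m : ℕ} (hm : Odd m)
    (hBm : ∀ i j, 0 ≤ (B ^ m) i j) :
    ∃ z : ι → ℝ, (∀ i, 0 < z i) ∧ B *ᵥ z = specRadius B • z := by
  obtain ⟨r, z, hz, hBz⟩ := exists_pos_eigenvector_of_commute_pos hM hMB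
  have hpow_le {μ : ℂ} (hμ : μ ∈ spectrumM B) : ‖μ‖ ^ m ≤ r ^ m := by
    obtain ⟨x, hx, hBx⟩ := mem_spectrumM_iff.1 hμ
    rw [← norm_pow]
    refine norm_le_of_nonneg_of_pos_eigenvector hBm hz (pow_mulVec_of_mulVec_eq_smul hBz m) hx ?_
    rw [← pow_mulVec_of_mulVec_eq_smul hBx m]
    exact congrArg (· *ᵥ x) (map_pow (Complex.ofRealHom.mapMatrix (m := ι)) B m)
  have hz0 : z ≠ 0 := fun h => (hz (Classical.arbitrary ι)).ne' (by simp [h])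
  have hr_mem := ofReal_mem_spectrumM hz0 hBz
  have hr : 0 ≤ r := by
    have := hpow_le hr_mem
    rw [Complex.norm_real, Real.norm_eq_abs] at this
    exact hm.pow_nonneg_iff.1 ((pow_nonneg (abs_nonneg r) m).trans this)
  have hρ : specRadius B = r := specRadius_eq_of_forall_norm_le hr_mem fun μ hμ =>
    (pow_le_pow_iff_left₀ (norm_nonneg μ) hr hm.pos.ne').1 (hpow_le hμ)
  exact ⟨z, hz, by rw [hρ]; exact hBz⟩

end CollatzWielandt

section Fin

variable {n : ℕ} {B : Matrix (Fin n) (Fin n) ℝ}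

lemma IrreducibleNonneg.exists_pos_commute (hB : IrreducibleNonneg B) :
    ∃ M : Matrix (Fin n) (Fin n) ℝ, (∀ i j, 0 < M i j) ∧ Commute M B := by
  choose K _ hK using hB.2
  set N := Finset.univ.sup fun p : Fin n × Fin n => K p.1 p.2
  refine ⟨∑ k ∈ Finset.range (N + 1), B ^ k, fun i j => ?_,
    Commute.sum_left _ _ _ fun k _ => (Commute.refl B).pow_left k⟩
  have hKN : K i j ∈ Finset.range (N + 1) := Finset.mem_range_succ_iff.2
    (Finset.le_sup (f := fun p : Fin n × Fin n => K p.1 p.2) (Finset.mem_univ (i, j)))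
  rw [Matrix.sum_apply]
  exact (hK i j).trans_le <|
    Finset.single_le_sum (fun k _ => pow_apply_nonneg hB.1 k i j) hKN

lemma IrreducibleNonneg.exists_pos_mulVec_eq_specRadius_smul (hn : 0 < n)
    (hB : IrreducibleNonneg B) : ∃ z : Fin n → ℝ, (∀ i, 0 < z i) ∧ B *ᵥ z = specRadius B • z :=
  have : Nonempty (Fin n) := ⟨⟨0, hn⟩⟩
  have ⟨_, hM, hMB⟩ := hB.exists_pos_commute
  exists_pos_mulVec_eq_specRadius_smul_of_commute_pos hM hMB odd_one (by simpa using hB.1)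

lemma EventuallyPositive.exists_pos_mulVec_eq_specRadius_smul (hn : 0 < n)
    (hB : EventuallyPositive B) : ∃ z : Fin n → ℝ, (∀ i, 0 < z i) ∧ B *ᵥ z = specRadius B • z :=
  have : Nonempty (Fin n) := ⟨⟨0, hn⟩⟩
  have ⟨k, hk⟩ := hB
  exists_pos_mulVec_eq_specRadius_smul_of_commute_pos (hk k le_rfl) ((Commute.refl B).pow_left k)
    (odd_two_mul_add_one k) fun i j => (hk _ (by omega) i j).le

variable {Θ P : Matrix (Fin n) (Fin n) ℝ}

lemma IsSwitching.mul_self (hΘ : IsSwitching Θ) : Θ * Θ = 1 := by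
  obtain ⟨θ, hθ, rfl⟩ := hΘ
  rw [diagonal_mul_diagonal, ← diagonal_one]
  congr 1
  funext i
  rcases hθ i with h | h <;> simp [h]

lemma IsSwitching.mulVec_apply_ne_zero (hΘ : IsSwitching Θ) {v : Fin n → ℝ}
    (hv : ∀ i, v i ≠ 0) (i : Fin n) : (Θ *ᵥ v) i ≠ 0 := by
  obtain ⟨θ, hθ, rfl⟩ := hΘ
  rw [mulVec_diagonal]
  exact mul_ne_zero (by rcases hθ i with h | h <;> simp [h]) (hv i)

lemma IsPermMatrix.transpose_mul_self (hP : IsPermMatrix P) : Pᵀ * P = 1 := by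
  obtain ⟨σ, rfl⟩ := hP
  ext i j
  simp [mul_apply, one_apply, σ.injective.eq_iff]

lemma IsPermMatrix.transpose_mulVec_apply_ne_zero (hP : IsPermMatrix P) {v : Fin n → ℝ}
    (hv : ∀ i, v i ≠ 0) (i : Fin n) : (Pᵀ *ᵥ v) i ≠ 0 := by
  obtain ⟨σ, rfl⟩ := hP
  simpa [mulVec, dotProduct] using hv (σ i)

end Fin

theorem stmt2 {n : ℕ} (hn : 0 < n) (A Θ P : Matrix (Fin n) (Fin n) ℝ)
    (hΘ : IsSwitching Θ) (hP : IsPermMatrix P)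
    (hA' : EventuallyPositive (Θ * P * A * Pᵀ * Θ) ∨
      IrreducibleNonneg (Θ * P * A * Pᵀ * Θ)) :
    ∃ v' : Fin n → ℝ, (∀ i, 0 < v' i) ∧
      (Θ * P * A * Pᵀ * Θ).mulVec v' = specRadius A • v' ∧
      (∀ i, (Pᵀ * Θ).mulVec v' i ≠ 0) ∧
      A.mulVec ((Pᵀ * Θ).mulVec v') = specRadius A • ((Pᵀ * Θ).mulVec v') := by
  have hinv : (Pᵀ * Θ) * (Θ * P) = 1 := by
    rw [mul_assoc, ← mul_assoc Θ, hΘ.mul_self, one_mul, hP.transpose_mul_self]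
  have hconj : Θ * P * A * Pᵀ * Θ = (Θ * P) * A * (Pᵀ * Θ) := by simp only [mul_assoc]
  have hρ : specRadius (Θ * P * A * Pᵀ * Θ) = specRadius A := hconj ▸ specRadius_conj hinv
  have hintertwine : A * (Pᵀ * Θ) = (Pᵀ * Θ) * (Θ * P * A * Pᵀ * Θ) := by
    rw [hconj, ← mul_assoc (Pᵀ * Θ), ← mul_assoc (Pᵀ * Θ), hinv, one_mul]
  obtain ⟨v', hv'pos, hv'⟩ := hA'.elim (·.exists_pos_mulVec_eq_specRadius_smul hn)
    (·.exists_pos_mulVec_eq_specRadius_smul hn)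
  rw [hρ] at hv'
  refine ⟨v', hv'pos, hv', fun i => ?_, ?_⟩
  · rw [← mulVec_mulVec]
    exact hP.transpose_mulVec_apply_ne_zero (hΘ.mulVec_apply_ne_zero fun j => (hv'pos j).ne') i
  · rw [mulVec_mulVec, hintertwine, ← mulVec_mulVec, hv', mulVec_smul]
end

section
/- Let A_a be a real N_a×N_a matrix, A_o a real N_o×N_o matrix, and d, u, α, β, γ, δ real numbers. Define J(u) := (−d + uα) I_{N_aN_o} + uγ (A_a ⊗ I_{N_o}) + uβ (I_{N_a} ⊗ A_o) + uδ (A_a ⊗ A_o). Then the multiset of complex eigenvalues of J(u) equals the multiset { −d + u(α + γλ + βμ + δλμ) : λ ∈ σ(A_a), μ ∈ σ(A_o) }, where eigenvalues are counted with multiplicity (each of the N_aN_o pairs (λ,μ) of roots contributes one eigenvalue of J(u)). -/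
open Matrix Polynomial

open Kronecker in
/-- The Jacobian at the neutral equilibrium of the homogeneous multi-topic
belief-formation model:
`J(u) = (−d + uα) I + uγ (A_a ⊗ I) + uβ (I ⊗ A_o) + uδ (A_a ⊗ A_o)`. -/
noncomputable def Jmat {Na No : ℕ} (Aa : Matrix (Fin Na) (Fin Na) ℝ)
    (Ao : Matrix (Fin No) (Fin No) ℝ) (d u α β γ δ : ℝ) :
    Matrix (Fin Na × Fin No) (Fin Na × Fin No) ℝ :=
  (-d + u * α) • (1 : Matrix (Fin Na × Fin No) (Fin Na × Fin No) ℝ)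
    + (u * γ) • (Aa ⊗ₖ (1 : Matrix (Fin No) (Fin No) ℝ))
    + (u * β) • ((1 : Matrix (Fin Na) (Fin Na) ℝ) ⊗ₖ Ao)
    + (u * δ) • (Aa ⊗ₖ Ao)

/-!
Both factors are triangularised over `ℂ`: an eigenvector of the dual map is a functional whose
kernel is an invariant hyperplane, and induction on the dimension produces a basis whose flag is
invariant. Conjugating `J(u)` by the Kronecker product of the two changes of basis replaces
`A_a`, `A_o` by their triangular forms `T_a`, `T_o`; the result is upper triangular for the
lexicographic order on index pairs, with diagonal entries `−d + u(α + γλ + βμ + δλμ)`.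
-/

open Module Kronecker

namespace Module.Basis

variable {K V : Type*} [Field K] [AddCommGroup V] [Module K V] {n : ℕ}

theorem isUpperTriangular_toMatrix_of_mem_flag (b : Basis (Fin n) K V) {f : End K V}
    (hf : ∀ j, f (b j) ∈ b.flag j.succ) : (LinearMap.toMatrix b b f).IsUpperTriangular := by
  intro i j hji
  rw [LinearMap.toMatrix_apply, ← b.coord_apply]
  exact b.flag_le_ker_coord (Fin.succ_le_castSucc_iff.mpr hji) (hf j)

theorem flag_castSucc_mkFinSnoc {N : Submodule K V} (c : Basis (Fin n) K N) (y : V)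
    (hli : ∀ (a : K), ∀ x ∈ N, a • y + x = 0 → a = 0) (hsp : ∀ z : V, ∃ a : K, z + a • y ∈ N)
    (k : Fin (n + 1)) : (mkFinSnoc c y hli hsp).flag k.castSucc = (c.flag k).map N.subtype := by
  simp only [flag, Submodule.map_span, coe_mkFinSnoc]
  congr 1
  ext x
  simp [Fin.exists_fin_succ', not_lt.mpr (Fin.le_last k)]

end Module.Basis

namespace Module.End

variable {K : Type*} [Field K] [IsAlgClosed K]

theorem exists_dual_ne_zero_mapsTo_ker {V : Type*} [AddCommGroup V] [Module K V]
    [FiniteDimensional K V] [Nontrivial V] (f : End K V) :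
    ∃ φ : Dual K V, φ ≠ 0 ∧ ∀ x ∈ LinearMap.ker φ, f x ∈ LinearMap.ker φ := by
  obtain ⟨μ, hμ⟩ := exists_eigenvalue f.dualMap
  obtain ⟨φ, hφ⟩ := hμ.exists_hasEigenvector
  refine ⟨φ, hφ.2, fun x hx => ?_⟩
  simpa [LinearMap.mem_ker.mp hx] using LinearMap.congr_fun hφ.apply_eq_smul x

theorem exists_basis_mem_flag {n : ℕ} {V : Type*} [AddCommGroup V] [Module K V]
    [FiniteDimensional K V] (hV : finrank K V = n) (f : End K V) :
    ∃ b : Basis (Fin n) K V, ∀ j, f (b j) ∈ b.flag j.succ := by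
  induction n generalizing V with
  | zero => exact ⟨finBasisOfFinrankEq K V hV, fun j => j.elim0⟩
  | succ n ih =>
    have : Nontrivial V := Module.nontrivial_of_finrank_eq_succ hV
    obtain ⟨φ, hφ, hmaps⟩ := exists_dual_ne_zero_mapsTo_ker f
    obtain ⟨y, hy⟩ : ∃ y, φ y ≠ 0 := by simpa [DFunLike.ext_iff] using hφ
    have hN : finrank K (LinearMap.ker φ) = n := by
      have := LinearMap.finrank_range_add_finrank_ker φ
      rw [LinearMap.range_eq_top.mpr (LinearMap.surjective_of_ne_zero hφ), finrank_top,
        finrank_self] at this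
      omega
    obtain ⟨c, hc⟩ := ih hN (f.restrict hmaps)
    have hli : ∀ (a : K), ∀ x ∈ LinearMap.ker φ, a • y + x = 0 → a = 0 := by
      intro a x hx h
      simpa [LinearMap.mem_ker.mp hx, hy] using congr_arg φ h
    have hsp : ∀ z : V, ∃ a : K, z + a • y ∈ LinearMap.ker φ := fun z =>
      ⟨-(φ z / φ y), by simp [hy]⟩
    refine ⟨Basis.mkFinSnoc c y hli hsp, Fin.lastCases ?_ fun j => ?_⟩
    · simp
    · have hmem := Submodule.mem_map_of_mem (f := (LinearMap.ker φ).subtype) (hc j)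
      rw [← Basis.flag_castSucc_mkFinSnoc c y hli hsp] at hmem
      rw [Fin.succ_castSucc]
      simpa [LinearMap.coe_restrict_apply] using hmem

end Module.End

theorem Finset.univ_val_map_bind_univ_val_map {α β γ δ ε : Type*} [Fintype α] [Fintype β]
    (f : α → γ) (g : β → δ) (h : γ → δ → ε) :
    ((univ.val.map f).bind fun x => (univ.val.map g).map (h x)) =
      univ.val.map fun p : α × β => h (f p.1) (g p.2) := by
  rw [Multiset.bind_map, ← univ_product_univ, product_val]
  simp only [SProd.sprod, Multiset.product, Multiset.map_bind, Multiset.map_map]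
  rfl

namespace Matrix

theorem exists_mul_eq_one_isUpperTriangular {K : Type*} [Field K] [IsAlgClosed K] {n : ℕ}
    (M : Matrix (Fin n) (Fin n) K) :
    ∃ P Q : Matrix (Fin n) (Fin n) K, Q * P = 1 ∧ (Q * M * P).IsUpperTriangular := by
  obtain ⟨b, hb⟩ := End.exists_basis_mem_flag (Module.finrank_fin_fun K) (toLin' M)
  refine ⟨(Pi.basisFun K (Fin n)).toMatrix b, b.toMatrix (Pi.basisFun K (Fin n)),
    b.toMatrix_mul_toMatrix_flip _, ?_⟩
  convert b.isUpperTriangular_toMatrix_of_mem_flag hb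
  rw [← basis_toMatrix_mul_linearMap_toMatrix_mul_basis_toMatrix b (Pi.basisFun K (Fin n)) b
      (Pi.basisFun K (Fin n)),
    LinearMap.toMatrix_eq_toMatrix', LinearMap.toMatrix'_toLin']

variable {R : Type*} [CommRing R]

theorem charpoly_mul_mul_of_mul_eq_one {n : Type*} [Fintype n] [DecidableEq n]
    {P Q : Matrix n n R} (h : Q * P = 1) (M : Matrix n n R) :
    (Q * M * P).charpoly = M.charpoly := by
  rw [charpoly_mul_comm, ← Matrix.mul_assoc, mul_eq_one_comm.mp h, Matrix.one_mul]

theorem IsUpperTriangular.roots_charpoly [IsDomain R] {n : Type*} [Fintype n] [DecidableEq n]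
    [LinearOrder n] {M : Matrix n n R} (h : M.IsUpperTriangular) :
    M.charpoly.roots = Finset.univ.val.map M.diag := by
  rw [charpoly_of_isUpperTriangular M h, Finset.prod_eq_multiset_prod,
    ← roots_multiset_prod_X_sub_C (Finset.univ.val.map M.diag), Multiset.map_map]
  rfl

theorem BlockTriangular.kronecker {l m α β : Type*} [LinearOrder α] [LinearOrder β]
    {A : Matrix l l R} {B : Matrix m m R} {a : l → α} {b : m → β}
    (hA : A.BlockTriangular a) (hB : B.BlockTriangular b) :
    (A ⊗ₖ B).BlockTriangular fun p => toLex (a p.1, b p.2) := by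
  rintro ⟨i₁, i₂⟩ ⟨j₁, j₂⟩ h
  rcases Prod.Lex.lt_iff.mp h with h₁ | ⟨-, h₂⟩
  · simp [hA h₁]
  · simp [hB h₂]

theorem BlockTriangular.smul {m α : Type*} [LT α] {M : Matrix m m R} {b : m → α}
    (h : M.BlockTriangular b) (c : R) : (c • M).BlockTriangular b := fun _ _ hij => by
  simp [h hij]

theorem BlockTriangular.roots_charpoly_of_toLex [IsDomain R] {l m : Type*} [Fintype l]
    [Fintype m] [DecidableEq l] [DecidableEq m] [LinearOrder l] [LinearOrder m]
    {M : Matrix (l × m) (l × m) R} (h : M.BlockTriangular toLex) :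
    M.charpoly.roots = Finset.univ.val.map M.diag := by
  have hU : (reindex toLex toLex M).IsUpperTriangular := blockTriangular_reindex_iff.mpr h
  rw [← charpoly_reindex toLex, hU.roots_charpoly]
  rfl

theorem mul_kronecker_mul_mul {l m : Type*} [Fintype l] [Fintype m]
    (Q₁ X P₁ : Matrix l l R) (Q₂ Y P₂ : Matrix m m R) :
    (Q₁ ⊗ₖ Q₂) * (X ⊗ₖ Y) * (P₁ ⊗ₖ P₂) = (Q₁ * X * P₁) ⊗ₖ (Q₂ * Y * P₂) := by
  rw [← mul_kronecker_mul, ← mul_kronecker_mul]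

section KroneckerCombination

variable {l m : Type*} [DecidableEq l] [DecidableEq m]

def kroneckerCombination (A : Matrix l l R) (B : Matrix m m R) (a b c e : R) :
    Matrix (l × m) (l × m) R :=
  a • (1 : Matrix (l × m) (l × m) R) + b • (A ⊗ₖ 1) + c • (1 ⊗ₖ B) + e • (A ⊗ₖ B)

theorem kroneckerCombination_apply_self (A : Matrix l l R) (B : Matrix m m R) (a b c e : R)
    (p : l × m) : kroneckerCombination A B a b c e p p =
      a + b * A p.1 p.1 + c * B p.2 p.2 + e * A p.1 p.1 * B p.2 p.2 := by
  simp [kroneckerCombination, mul_assoc]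

theorem map_kroneckerCombination {S : Type*} [CommRing S] (f : R →+* S) (A : Matrix l l R)
    (B : Matrix m m R) (a b c e : R) : (kroneckerCombination A B a b c e).map f =
      kroneckerCombination (A.map f) (B.map f) (f a) (f b) (f c) (f e) := by
  ext ⟨i, j⟩ ⟨k, l⟩
  by_cases hik : i = k <;> by_cases hjl : j = l <;> simp [kroneckerCombination, hik, hjl]

theorem kronecker_mul_kroneckerCombination_mul [Fintype l] [Fintype m] {PA QA A : Matrix l l R}
    {PB QB B : Matrix m m R} (hA : QA * PA = 1) (hB : QB * PB = 1) (a b c e : R) :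
    (QA ⊗ₖ QB) * kroneckerCombination A B a b c e * (PA ⊗ₖ PB) =
      kroneckerCombination (QA * A * PA) (QB * B * PB) a b c e := by
  simp only [kroneckerCombination, Matrix.mul_add, Matrix.add_mul, Matrix.mul_smul,
    Matrix.smul_mul, ← one_kronecker_one, mul_kronecker_mul_mul, Matrix.mul_one, hA, hB]

theorem IsUpperTriangular.kroneckerCombination [LinearOrder l] [LinearOrder m]
    {A : Matrix l l R} {B : Matrix m m R} (hA : A.IsUpperTriangular) (hB : B.IsUpperTriangular)
    (a b c e : R) : (kroneckerCombination A B a b c e).BlockTriangular toLex := by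
  have h1A : (1 : Matrix l l R).IsUpperTriangular := blockTriangular_one
  have h1B : (1 : Matrix m m R).IsUpperTriangular := blockTriangular_one
  rw [Matrix.kroneckerCombination, ← one_kronecker_one]
  exact ((((h1A.kronecker h1B).smul a).add ((hA.kronecker h1B).smul b)).add
    ((h1A.kronecker hB).smul c)).add ((hA.kronecker hB).smul e)

end KroneckerCombination

theorem roots_charpoly_kroneckerCombination {K : Type*} [Field K] [IsAlgClosed K] {m n : ℕ}
    (A : Matrix (Fin m) (Fin m) K) (B : Matrix (Fin n) (Fin n) K) (a b c e : K) :
    (kroneckerCombination A B a b c e).charpoly.roots =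
      A.charpoly.roots.bind fun x => B.charpoly.roots.map fun y =>
        a + b * x + c * y + e * x * y := by
  obtain ⟨PA, QA, hA, hTA⟩ := exists_mul_eq_one_isUpperTriangular A
  obtain ⟨PB, QB, hB, hTB⟩ := exists_mul_eq_one_isUpperTriangular B
  have hQP : (QA ⊗ₖ QB) * (PA ⊗ₖ PB) = 1 := by
    rw [← mul_kronecker_mul, hA, hB, one_kronecker_one]
  rw [← charpoly_mul_mul_of_mul_eq_one hQP, kronecker_mul_kroneckerCombination_mul hA hB,
    (hTA.kroneckerCombination hTB a b c e).roots_charpoly_of_toLex,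
    ← charpoly_mul_mul_of_mul_eq_one hA, ← charpoly_mul_mul_of_mul_eq_one hB, hTA.roots_charpoly,
    hTB.roots_charpoly, Finset.univ_val_map_bind_univ_val_map]
  exact Multiset.map_congr rfl fun p _ => kroneckerCombination_apply_self _ _ a b c e p

end Matrix

theorem stmt4 {Na No : ℕ} (Aa : Matrix (Fin Na) (Fin Na) ℝ)
    (Ao : Matrix (Fin No) (Fin No) ℝ) (d u α β γ δ : ℝ) :
    spectrumM (Jmat Aa Ao d u α β γ δ) =
      (spectrumM Aa).bind (fun lam => (spectrumM Ao).map (fun mu =>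
        -(d : ℂ) + (u : ℂ) * ((α : ℂ) + (γ : ℂ) * lam + (β : ℂ) * mu
          + (δ : ℂ) * lam * mu))) := by
  have hJ : (Jmat Aa Ao d u α β γ δ).map Complex.ofReal =
      kroneckerCombination (Aa.map (↑)) (Ao.map (↑)) ((-d + u * α : ℝ) : ℂ) ((u * γ : ℝ) : ℂ)
        ((u * β : ℝ) : ℂ) ((u * δ : ℝ) : ℂ) :=
    map_kroneckerCombination Complex.ofRealHom Aa Ao _ _ _ _
  rw [spectrumM, hJ, roots_charpoly_kroneckerCombination]
  refine Multiset.bind_congr fun x _ => Multiset.map_congr rfl fun y _ => ?_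
  push_cast
  ring
end

section
/- Let A_a be a real N_a×N_a matrix, A_o a real N_o×N_o matrix, d > 0, and α, β, γ, δ ≥ 0. Set ξ_max := max over (λ,μ) ∈ σ(A_a)×σ(A_o) of (α + γ Re λ + β Re μ + δ Re(λμ)), assume ξ_max > 0, and let u* := d/ξ_max. Define J(u) := (−d + uα) I_{N_aN_o} + uγ (A_a ⊗ I_{N_o}) + uβ (I_{N_a} ⊗ A_o) + uδ (A_a ⊗ A_o). Then: (1) for every u with 0 ≤ u < u*, every complex eigenvalue η of J(u) satisfies Re η < 0; (2) for every u > u*, J(u) has a complex eigenvalue η with Re η > 0. -/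
/-!
`J(u)` is `p(A_a ⊗ I, I ⊗ A_o)` for the biaffine polynomial
`p(x, y) = (−d + uα) + uγ x + uβ y + uδ xy`, and the two arguments commute. Hence the
eigenvalues of `J(u)` are exactly the numbers `p(λ, μ)` with `λ ∈ σ(A_a)`, `μ ∈ σ(A_o)`:
a pure tensor of eigenvectors is an eigenvector of `J(u)`, and conversely an eigenspace of
`J(u)` contains a common eigenvector of the two commuting factors, whose eigenvalues are
eigenvalues of `A_a` and `A_o` (read off a nonzero slice). As
`Re p(λ, μ) = −d + u (α + γ Re λ + β Re μ + δ Re (λμ))`, the sign of the real parts is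
governed by `u ξ_max − d`.
-/

open Matrix Polynomial

namespace Module.End

variable {K V : Type*} [Field K] [IsAlgClosed K] [AddCommGroup V] [Module K V]
  [FiniteDimensional K V]

theorem exists_hasEigenvector_mem_of_mapsTo (f : End K V) {W : Submodule K V} (hW : W ≠ ⊥)
    (hf : Set.MapsTo f W W) :
    ∃ a, ∃ v ∈ W, f.HasEigenvector a v := by
  have : Nontrivial W := Submodule.nontrivial_iff_ne_bot.mpr hW
  obtain ⟨a, ha⟩ := exists_eigenvalue (f.restrict hf)
  obtain ⟨v, hv⟩ := ha.exists_hasEigenvector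
  refine ⟨a, v, v.2, mem_eigenspace_iff.mpr ?_, by simpa using hv.2⟩
  exact congrArg Subtype.val hv.apply_eq_smul

theorem exists_hasEigenvalue_of_hasEigenvalue_biaffine {f g : End K V} (hfg : Commute f g)
    (c₀ c₁ c₂ c₃ : K) {η : K}
    (hη : (c₀ • 1 + c₁ • f + c₂ • g + c₃ • (f * g)).HasEigenvalue η) :
    ∃ a b, f.HasEigenvalue a ∧ g.HasEigenvalue b ∧ η = c₀ + c₁ * a + c₂ * b + c₃ * (a * b) := by
  set J := c₀ • 1 + c₁ • f + c₂ • g + c₃ • (f * g)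
  have hfJ : Commute f J :=
    ((((Commute.one_right f).smul_right c₀).add_right ((Commute.refl f).smul_right c₁)).add_right
      (hfg.smul_right c₂)).add_right (((Commute.refl f).mul_right hfg).smul_right c₃)
  have hgJ : Commute g J :=
    ((((Commute.one_right g).smul_right c₀).add_right (hfg.symm.smul_right c₁)).add_right
      ((Commute.refl g).smul_right c₂)).add_right
      ((hfg.symm.mul_right (Commute.refl g)).smul_right c₃)
  obtain ⟨a, v, hvJ, hvf⟩ := f.exists_hasEigenvector_mem_of_mapsTo
    (hasEigenvalue_iff.mp hη) (mapsTo_genEigenspace_of_comm hfJ.symm η 1)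
  have hW : J.eigenspace η ⊓ f.eigenspace a ≠ ⊥ :=
    Submodule.ne_bot_iff _ |>.mpr ⟨v, ⟨hvJ, hvf.1⟩, hvf.2⟩
  obtain ⟨b, w, ⟨hwJ, hwf⟩, hwg⟩ := g.exists_hasEigenvector_mem_of_mapsTo hW
    ((mapsTo_genEigenspace_of_comm hgJ.symm η 1).inter_inter
      (mapsTo_genEigenspace_of_comm hfg a 1))
  refine ⟨a, b, hasEigenvalue_of_hasEigenvector ⟨hwf, hwg.2⟩,
    hasEigenvalue_of_hasEigenvector hwg, ?_⟩
  have hJw : J w = (c₀ + c₁ * a + c₂ * b + c₃ * (a * b)) • w := by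
    simp only [J, LinearMap.add_apply, LinearMap.smul_apply, one_apply, mul_apply,
      hwg.apply_eq_smul, map_smul, mem_eigenspace_iff.mp hwf]
    module
  exact smul_left_injective K hwg.2 ((mem_eigenspace_iff.mp hwJ).symm.trans hJw)

end Module.End

namespace Matrix

open Kronecker Module.End

variable {R K m n : Type*} [Fintype m] [Fintype n]

theorem kronecker_mulVec_mul_apply [CommSemiring R] (A : Matrix m m R) (B : Matrix n n R)
    (v : m → R) (w : n → R) :
    (A ⊗ₖ B) *ᵥ (fun p => v p.1 * w p.2) = fun p => (A *ᵥ v) p.1 * (B *ᵥ w) p.2 := by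
  funext p
  simp only [mulVec, dotProduct, kroneckerMap_apply, Fintype.sum_prod_type, Finset.sum_mul_sum]
  exact Finset.sum_congr rfl fun _ _ => Finset.sum_congr rfl fun _ _ => by ring

theorem kronecker_one_mulVec_apply [CommSemiring R] [DecidableEq n] (A : Matrix m m R)
    (x : m × n → R) (i : m) (j : n) :
    ((A ⊗ₖ (1 : Matrix n n R)) *ᵥ x) (i, j) = (A *ᵥ fun k => x (k, j)) i := by
  simp [mulVec, dotProduct, kroneckerMap_apply, Fintype.sum_prod_type, one_apply]

theorem one_kronecker_mulVec_apply [CommSemiring R] [DecidableEq m] (B : Matrix n n R)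
    (x : m × n → R) (i : m) (j : n) :
    (((1 : Matrix m m R) ⊗ₖ B) *ᵥ x) (i, j) = (B *ᵥ fun l => x (i, l)) j := by
  simp [mulVec, dotProduct, kroneckerMap_apply, Fintype.sum_prod_type, one_apply]

theorem hasEigenvalue_toLin'_iff [CommRing R] [DecidableEq m] (A : Matrix m m R) (a : R) :
    HasEigenvalue (toLin' A) a ↔ ∃ v ≠ 0, A *ᵥ v = a • v := by
  simp only [hasEigenvalue_iff, Submodule.ne_bot_iff, mem_eigenspace_iff, toLin'_apply]
  exact ⟨fun ⟨v, hv, h⟩ => ⟨v, h, hv⟩, fun ⟨v, h, hv⟩ => ⟨v, hv, h⟩⟩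

theorem hasEigenvalue_of_hasEigenvalue_kronecker_one [CommRing R] [DecidableEq m]
    [DecidableEq n]
    {A : Matrix m m R} {a : R} (h : HasEigenvalue (toLin' (A ⊗ₖ (1 : Matrix n n R))) a) :
    HasEigenvalue (toLin' A) a := by
  obtain ⟨x, hx, hAx⟩ := (hasEigenvalue_toLin'_iff _ a).mp h
  obtain ⟨⟨i, j⟩, hij⟩ := Function.ne_iff.mp hx
  refine (hasEigenvalue_toLin'_iff A a).mpr ⟨fun k => x (k, j), Function.ne_iff.mpr ⟨i, hij⟩, ?_⟩
  funext k
  simpa [kronecker_one_mulVec_apply] using congrFun hAx (k, j)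

theorem hasEigenvalue_of_hasEigenvalue_one_kronecker [CommRing R] [DecidableEq m]
    [DecidableEq n]
    {B : Matrix n n R} {b : R} (h : HasEigenvalue (toLin' ((1 : Matrix m m R) ⊗ₖ B)) b) :
    HasEigenvalue (toLin' B) b := by
  obtain ⟨x, hx, hBx⟩ := (hasEigenvalue_toLin'_iff _ b).mp h
  obtain ⟨⟨i, j⟩, hij⟩ := Function.ne_iff.mp hx
  refine (hasEigenvalue_toLin'_iff B b).mpr ⟨fun l => x (i, l), Function.ne_iff.mpr ⟨j, hij⟩, ?_⟩
  funext l
  simpa [one_kronecker_mulVec_apply] using congrFun hBx (i, l)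

theorem mem_roots_charpoly_iff_hasEigenvalue [Field K] [DecidableEq m] (A : Matrix m m K)
    (a : K) :
    a ∈ A.charpoly.roots ↔ HasEigenvalue (toLin' A) a := by
  rw [mem_roots A.charpoly_monic.ne_zero, hasEigenvalue_iff_isRoot_charpoly, charpoly_toLin']

theorem mem_roots_charpoly_biaffine_kronecker_iff [Field K] [IsAlgClosed K] [DecidableEq m]
    [DecidableEq n] (A : Matrix m m K) (B : Matrix n n K) (c₀ c₁ c₂ c₃ η : K) :
    η ∈ (c₀ • 1 + c₁ • (A ⊗ₖ (1 : Matrix n n K)) + c₂ • ((1 : Matrix m m K) ⊗ₖ B)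
        + c₃ • (A ⊗ₖ B)).charpoly.roots ↔
      ∃ a ∈ A.charpoly.roots, ∃ b ∈ B.charpoly.roots,
        η = c₀ + c₁ * a + c₂ * b + c₃ * (a * b) := by
  simp only [mem_roots_charpoly_iff_hasEigenvalue]
  constructor
  · intro hη
    have hcomm :
        Commute (toLin' (A ⊗ₖ (1 : Matrix n n K))) (toLin' ((1 : Matrix m m K) ⊗ₖ B)) := by
      rw [Commute, SemiconjBy, mul_eq_comp, mul_eq_comp, ← toLin'_mul, ← toLin'_mul,
        ← mul_kronecker_mul, ← mul_kronecker_mul, mul_one, one_mul, one_mul, mul_one]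
    rw [← mul_one A, ← one_mul B, mul_kronecker_mul, mul_one A, one_mul B] at hη
    simp only [map_add, map_smul, toLin'_one, toLin'_mul, ← mul_eq_comp] at hη
    obtain ⟨a, b, ha, hb, rfl⟩ := exists_hasEigenvalue_of_hasEigenvalue_biaffine hcomm _ _ _ _ hη
    exact ⟨a, hasEigenvalue_of_hasEigenvalue_kronecker_one ha,
      b, hasEigenvalue_of_hasEigenvalue_one_kronecker hb, rfl⟩
  · rintro ⟨a, ha, b, hb, rfl⟩
    obtain ⟨v, hv, hAv⟩ := (hasEigenvalue_toLin'_iff A a).mp ha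
    obtain ⟨w, hw, hBw⟩ := (hasEigenvalue_toLin'_iff B b).mp hb
    obtain ⟨i, hi⟩ := Function.ne_iff.mp hv
    obtain ⟨j, hj⟩ := Function.ne_iff.mp hw
    refine (hasEigenvalue_toLin'_iff _ _).mpr
      ⟨fun p => v p.1 * w p.2, Function.ne_iff.mpr ⟨(i, j), mul_ne_zero hi hj⟩, ?_⟩
    simp only [add_mulVec, smul_mulVec, one_mulVec, kronecker_mulVec_mul_apply, hAv, hBw]
    funext p
    simp only [Pi.add_apply, Pi.smul_apply, smul_eq_mul]
    ring

end Matrix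

open Kronecker in
theorem Jmat_map_ofReal {Na No : ℕ} (Aa : Matrix (Fin Na) (Fin Na) ℝ)
    (Ao : Matrix (Fin No) (Fin No) ℝ) (d u α β γ δ : ℝ) :
    (Jmat Aa Ao d u α β γ δ).map Complex.ofReal =
      ((-d + u * α : ℝ) : ℂ) • 1 + ((u * γ : ℝ) : ℂ) • (Aa.map Complex.ofReal ⊗ₖ 1)
        + ((u * β : ℝ) : ℂ) • (1 ⊗ₖ Ao.map Complex.ofReal)
        + ((u * δ : ℝ) : ℂ) • (Aa.map Complex.ofReal ⊗ₖ Ao.map Complex.ofReal) := by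
  ext ⟨i, j⟩ ⟨k, l⟩
  simp [Jmat, one_apply, apply_ite Complex.ofReal]

theorem mem_spectrumM_Jmat_iff {Na No : ℕ} (Aa : Matrix (Fin Na) (Fin Na) ℝ)
    (Ao : Matrix (Fin No) (Fin No) ℝ) (d u α β γ δ : ℝ) (η : ℂ) :
    η ∈ spectrumM (Jmat Aa Ao d u α β γ δ) ↔ ∃ lam ∈ spectrumM Aa, ∃ mu ∈ spectrumM Ao,
      η = -d + u * (α + γ * lam + β * mu + δ * (lam * mu)) := by
  rw [spectrumM, Jmat_map_ofReal, mem_roots_charpoly_biaffine_kronecker_iff]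
  refine exists_congr fun lam => and_congr_right fun _ =>
    exists_congr fun mu => and_congr_right fun _ => ?_
  constructor <;> rintro rfl <;> push_cast <;> ring

theorem stmt5_general {Na No : ℕ} (Aa : Matrix (Fin Na) (Fin Na) ℝ)
    (Ao : Matrix (Fin No) (Fin No) ℝ) (d α β γ δ ξmax : ℝ)
    (hattain : ∃ lam ∈ spectrumM Aa, ∃ mu ∈ spectrumM Ao,
      α + γ * lam.re + β * mu.re + δ * (lam * mu).re = ξmax)
    (hub : ∀ lam ∈ spectrumM Aa, ∀ mu ∈ spectrumM Ao,
      α + γ * lam.re + β * mu.re + δ * (lam * mu).re ≤ ξmax)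
    (hξ : 0 < ξmax) :
    (∀ u : ℝ, 0 ≤ u → u < d / ξmax →
      ∀ η ∈ spectrumM (Jmat Aa Ao d u α β γ δ), η.re < 0) ∧
    (∀ u : ℝ, d / ξmax < u →
      ∃ η ∈ spectrumM (Jmat Aa Ao d u α β γ δ), 0 < η.re) := by
  have hre (u : ℝ) (lam mu : ℂ) :
      (-d + u * (α + γ * lam + β * mu + δ * (lam * mu)) : ℂ).re
        = -d + u * (α + γ * lam.re + β * mu.re + δ * (lam * mu).re) := by
    simp
  constructor
  · intro u hu₀ hu η hη
    obtain ⟨lam, hlam, mu, hmu, rfl⟩ := (mem_spectrumM_Jmat_iff Aa Ao d u α β γ δ η).mp hη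
    rw [hre]
    linarith [mul_le_mul_of_nonneg_left (hub lam hlam mu hmu) hu₀, (lt_div_iff₀ hξ).mp hu]
  · intro u hu
    obtain ⟨lam, hlam, mu, hmu, hξmax⟩ := hattain
    refine ⟨_, (mem_spectrumM_Jmat_iff Aa Ao d u α β γ δ _).mpr ⟨lam, hlam, mu, hmu, rfl⟩, ?_⟩
    rw [hre, hξmax]
    linarith [(div_lt_iff₀ hξ).mp hu]

theorem stmt5 {Na No : ℕ} (Aa : Matrix (Fin Na) (Fin Na) ℝ)
    (Ao : Matrix (Fin No) (Fin No) ℝ) (d α β γ δ ξmax : ℝ)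
    (hd : 0 < d) (hα : 0 ≤ α) (hβ : 0 ≤ β) (hγ : 0 ≤ γ) (hδ : 0 ≤ δ)
    (hattain : ∃ lam ∈ spectrumM Aa, ∃ mu ∈ spectrumM Ao,
      α + γ * lam.re + β * mu.re + δ * (lam * mu).re = ξmax)
    (hub : ∀ lam ∈ spectrumM Aa, ∀ mu ∈ spectrumM Ao,
      α + γ * lam.re + β * mu.re + δ * (lam * mu).re ≤ ξmax)
    (hξ : 0 < ξmax) :
    (∀ u : ℝ, 0 ≤ u → u < d / ξmax →
      ∀ η ∈ spectrumM (Jmat Aa Ao d u α β γ δ), η.re < 0) ∧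
    (∀ u : ℝ, d / ξmax < u →
      ∃ η ∈ spectrumM (Jmat Aa Ao d u α β γ δ), 0 < η.re) :=
  stmt5_general Aa Ao d α β γ δ ξmax hattain hub hξ
end

section
/- Let A_a and A_o be real symmetric square matrices, each switching isomorphic to an entrywise nonnegative irreducible matrix (Class II), and each sign-symmetric, i.e. for each of them there exist a switching matrix Θ' and permutation matrix P' with Θ'P'AP'ᵀΘ' = −A. Then the set Λ₂ := {(λ,μ) ∈ σ(A_a)×σ(A_o) : λμ = max over σ(A_a)×σ(A_o) of λ'μ'} (all eigenvalues being real) equals the two-element set {(ρ(A_a), ρ(A_o)), (−ρ(A_a), −ρ(A_o))}. -/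
/-!
A real symmetric matrix has real spectrum. Conjugation by the invertible matrix `ΘP` preserves the
characteristic polynomial, so a sign-symmetric matrix has the same characteristic polynomial as its
negation and its spectrum is symmetric about `0`; in particular it contains both `ρ` and `-ρ`. An
irreducible matrix is nonzero, hence `ρ > 0`. Finally, for real `x, y` with `|x| ≤ ρₐ`, `|y| ≤ ρₒ`
one has `xy ≤ ρₐρₒ`, with equality exactly at `(ρₐ, ρₒ)` and `(-ρₐ, -ρₒ)`.
-/

open Matrix Polynomial

/-- Class I: switching isomorphic to an eventually positive matrix. -/
def ClassI {n : ℕ} (A : Matrix (Fin n) (Fin n) ℝ) : Prop :=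
  ∃ Θ P : Matrix (Fin n) (Fin n) ℝ, IsSwitching Θ ∧ IsPermMatrix P ∧
    EventuallyPositive (Θ * P * A * Pᵀ * Θ)

/-- Class II: switching isomorphic to an entrywise nonnegative irreducible matrix. -/
def ClassII {n : ℕ} (A : Matrix (Fin n) (Fin n) ℝ) : Prop :=
  ∃ Θ P : Matrix (Fin n) (Fin n) ℝ, IsSwitching Θ ∧ IsPermMatrix P ∧
    IrreducibleNonneg (Θ * P * A * Pᵀ * Θ)

/-- The maximal real part of the eigenvalues. -/
noncomputable def maxRe {m : Type*} [Fintype m] [DecidableEq m]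
    (A : Matrix m m ℝ) : ℝ :=
  sSup {r : ℝ | ∃ z ∈ spectrumM A, z.re = r}

/-- The maximal real part of pairwise products of eigenvalues of two matrices. -/
noncomputable def maxReProd {m m' : Type*} [Fintype m] [DecidableEq m]
    [Fintype m'] [DecidableEq m'] (Aa : Matrix m m ℝ) (Ao : Matrix m' m' ℝ) : ℝ :=
  sSup {r : ℝ | ∃ z ∈ spectrumM Aa, ∃ w ∈ spectrumM Ao, (z * w).re = r}

/-- Sign-symmetric: switching isomorphic to its negation. -/
def SignSymmetric {n : ℕ} (A : Matrix (Fin n) (Fin n) ℝ) : Prop :=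
  ∃ Θ P : Matrix (Fin n) (Fin n) ℝ, IsSwitching Θ ∧ IsPermMatrix P ∧
    Θ * P * A * Pᵀ * Θ = -A

section Spectrum

variable {m : Type*} [Fintype m] [DecidableEq m]

lemma mem_spectrumM_iff_s8 {A : Matrix m m ℝ} {z : ℂ} :
    z ∈ spectrumM A ↔ z ∈ spectrum ℂ (A.map Complex.ofReal) := by
  rw [spectrumM, mem_roots (charpoly_monic _).ne_zero, mem_spectrum_iff_isRoot_charpoly]

lemma spectrumM_eq_roots_map_charpoly (A : Matrix m m ℝ) :
    spectrumM A = (A.charpoly.map Complex.ofRealHom).roots := by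
  rw [spectrumM, ← charpoly_map]
  rfl

lemma spectrumM_eq_of_charpoly_eq {A B : Matrix m m ℝ} (h : A.charpoly = B.charpoly) :
    spectrumM A = spectrumM B := by
  rw [spectrumM_eq_roots_map_charpoly, spectrumM_eq_roots_map_charpoly, h]

lemma neg_mem_spectrumM_of_charpoly_neg {A : Matrix m m ℝ} (h : (-A).charpoly = A.charpoly)
    {z : ℂ} (hz : z ∈ spectrumM A) : -z ∈ spectrumM A := by
  rw [← spectrumM_eq_of_charpoly_eq h, mem_spectrumM_iff_s8, Matrix.map_neg _ Complex.ofReal_neg,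
    ← spectrum.neg_eq, Set.neg_mem_neg]
  exact mem_spectrumM_iff_s8.1 hz

omit [Fintype m] [DecidableEq m] in
lemma isHermitian_map_ofReal {A : Matrix m m ℝ} (hA : A.IsSymm) :
    (A.map Complex.ofReal).IsHermitian :=
  (isHermitian_iff_isSymm.2 hA).map _ fun x => (Complex.conj_ofReal x).symm

lemma spectrumM_eq_map_eigenvalues {A : Matrix m m ℝ} (hA : A.IsSymm) :
    spectrumM A = Finset.univ.val.map fun i => ((isHermitian_map_ofReal hA).eigenvalues i : ℂ) :=
  (isHermitian_map_ofReal hA).roots_charpoly_eq_eigenvalues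

lemma exists_mem_spectrumM [Nonempty m] (A : Matrix m m ℝ) : ∃ z, z ∈ spectrumM A := by
  obtain ⟨z, hz⟩ := Complex.exists_root (f := (A.map Complex.ofReal).charpoly)
    (by rw [charpoly_degree_eq_dim]; exact_mod_cast Fintype.card_pos)
  exact ⟨z, (mem_roots (charpoly_monic _).ne_zero).2 hz⟩

lemma exists_ofReal_eq_of_mem_spectrumM {A : Matrix m m ℝ} (hA : A.IsSymm) {z : ℂ}
    (hz : z ∈ spectrumM A) : ∃ x : ℝ, (x : ℂ) = z := by
  rw [spectrumM_eq_map_eigenvalues hA, Multiset.mem_map] at hz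
  obtain ⟨i, -, rfl⟩ := hz
  exact ⟨_, rfl⟩

lemma exists_mem_spectrumM_ne_zero {A : Matrix m m ℝ} (hA : A.IsSymm) (h0 : A ≠ 0) :
    ∃ z ∈ spectrumM A, z ≠ 0 := by
  have hH := isHermitian_map_ofReal hA
  have : hH.eigenvalues ≠ 0 := by
    rw [Ne, hH.eigenvalues_eq_zero_iff]
    exact fun h => h0 (Matrix.map_injective Complex.ofReal_injective (by simpa using h))
  obtain ⟨i, hi⟩ := Function.ne_iff.1 this
  refine ⟨_, ?_, Complex.ofReal_ne_zero.2 hi⟩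
  rw [spectrumM_eq_map_eigenvalues hA]
  exact Multiset.mem_map_of_mem _ (Finset.mem_univ i)

lemma finite_norms_spectrumM (A : Matrix m m ℝ) :
    {r : ℝ | ∃ z ∈ spectrumM A, ‖z‖ = r}.Finite := by
  simpa [Set.image] using (spectrumM A).toFinset.finite_toSet.image (‖·‖)

lemma norm_le_specRadius {A : Matrix m m ℝ} {z : ℂ} (hz : z ∈ spectrumM A) :
    ‖z‖ ≤ specRadius A :=
  le_csSup (finite_norms_spectrumM A).bddAbove ⟨z, hz, rfl⟩

lemma abs_le_specRadius {A : Matrix m m ℝ} {x : ℝ} (hx : (x : ℂ) ∈ spectrumM A) :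
    |x| ≤ specRadius A := by
  simpa using norm_le_specRadius hx

lemma exists_norm_eq_specRadius {A : Matrix m m ℝ} {z : ℂ} (hz : z ∈ spectrumM A) :
    ∃ z ∈ spectrumM A, ‖z‖ = specRadius A :=
  Set.Nonempty.csSup_mem (s := {r : ℝ | ∃ z ∈ spectrumM A, ‖z‖ = r}) ⟨‖z‖, z, hz, rfl⟩
    (finite_norms_spectrumM A)

lemma exists_ofReal_specRadius_or_neg_mem_spectrumM [Nonempty m] {A : Matrix m m ℝ}
    (hA : A.IsSymm) :
    (specRadius A : ℂ) ∈ spectrumM A ∨ -(specRadius A : ℂ) ∈ spectrumM A := by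
  obtain ⟨z, hz⟩ := exists_mem_spectrumM A
  obtain ⟨w, hw, hnorm⟩ := exists_norm_eq_specRadius hz
  obtain ⟨x, rfl⟩ := exists_ofReal_eq_of_mem_spectrumM hA hw
  rw [Complex.norm_real, Real.norm_eq_abs] at hnorm
  rcases (abs_eq (hnorm ▸ abs_nonneg x)).1 hnorm with rfl | rfl
  · exact .inl hw
  · exact .inr (by simpa using hw)

lemma specRadius_pos_of_mem_spectrumM {A : Matrix m m ℝ} {z : ℂ} (hz : z ∈ spectrumM A)
    (hz0 : z ≠ 0) : 0 < specRadius A :=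
  (norm_pos_iff.2 hz0).trans_le (norm_le_specRadius hz)

end Spectrum

section Switching

variable {n : ℕ}

lemma IsSwitching.mul_self_s8 {Θ : Matrix (Fin n) (Fin n) ℝ} (h : IsSwitching Θ) : Θ * Θ = 1 := by
  obtain ⟨θ, hθ, rfl⟩ := h
  rw [diagonal_mul_diagonal, ← diagonal_one]
  congr 1
  funext i
  rcases hθ i with h | h <;> simp [h]

lemma IsPermMatrix.transpose_mul_self_s8 {P : Matrix (Fin n) (Fin n) ℝ} (h : IsPermMatrix P) :
    Pᵀ * P = 1 := by
  obtain ⟨σ, rfl⟩ := h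
  ext i j
  simp [mul_apply, one_apply]

lemma charpoly_conj_of_mul_eq_one {k R : Type*} [Fintype k] [DecidableEq k] [CommRing R]
    {U V : Matrix k k R} (h : V * U = 1) (A : Matrix k k R) :
    (U * A * V).charpoly = A.charpoly := by
  rw [charpoly_mul_comm, ← mul_assoc, h, one_mul]

lemma SignSymmetric.charpoly_neg {A : Matrix (Fin n) (Fin n) ℝ} (h : SignSymmetric A) :
    (-A).charpoly = A.charpoly := by
  obtain ⟨Θ, P, hΘ, hP, hA⟩ := h
  have hinv : (Pᵀ * Θ) * (Θ * P) = 1 := by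
    rw [mul_assoc, ← mul_assoc Θ, hΘ.mul_self_s8, one_mul, hP.transpose_mul_self_s8]
  rw [← hA, ← charpoly_conj_of_mul_eq_one hinv A]
  simp only [mul_assoc]

lemma SignSymmetric.neg_mem_spectrumM {A : Matrix (Fin n) (Fin n) ℝ} (h : SignSymmetric A)
    {z : ℂ} (hz : z ∈ spectrumM A) : -z ∈ spectrumM A :=
  neg_mem_spectrumM_of_charpoly_neg h.charpoly_neg hz

lemma ClassII.ne_zero {A : Matrix (Fin n) (Fin n) ℝ} (h : ClassII A) (hn : 0 < n) : A ≠ 0 := by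
  rintro rfl
  obtain ⟨Θ, P, -, -, -, hirr⟩ := h
  obtain ⟨k, hk, hpos⟩ := hirr ⟨0, hn⟩ ⟨0, hn⟩
  simp [zero_pow hk.ne'] at hpos

end Switching

lemma SignSymmetric.ofReal_specRadius_mem_spectrumM {n : ℕ} {A : Matrix (Fin n) (Fin n) ℝ}
    (h : SignSymmetric A) (hA : A.IsSymm) (hn : 0 < n) : (specRadius A : ℂ) ∈ spectrumM A := by
  have := Fin.pos_iff_nonempty.1 hn
  rcases exists_ofReal_specRadius_or_neg_mem_spectrumM hA with hρ | hρ
  · exact hρ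
  · simpa using h.neg_mem_spectrumM hρ

lemma ClassII.specRadius_pos {n : ℕ} {A : Matrix (Fin n) (Fin n) ℝ} (h : ClassII A)
    (hA : A.IsSymm) (hn : 0 < n) : 0 < specRadius A :=
  let ⟨_, hz, hz0⟩ := exists_mem_spectrumM_ne_zero hA (h.ne_zero hn)
  specRadius_pos_of_mem_spectrumM hz hz0

section Products

variable {α : Type*} [CommRing α] [LinearOrder α] [IsStrictOrderedRing α] {x y a b : α}

lemma mul_le_mul_of_abs_le (hx : |x| ≤ a) (hy : |y| ≤ b) : x * y ≤ a * b :=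
  calc x * y ≤ |x| * |y| := abs_mul x y ▸ le_abs_self _
    _ ≤ a * b := mul_le_mul hx hy (abs_nonneg _) ((abs_nonneg _).trans hx)

lemma mul_eq_mul_iff_of_abs_le (ha : 0 < a) (hb : 0 < b) (hx : |x| ≤ a) (hy : |y| ≤ b) :
    x * y = a * b ↔ x = a ∧ y = b ∨ x = -a ∧ y = -b := by
  constructor
  · intro h
    have hxy : |x| * |y| = a * b := by rw [← abs_mul, h, abs_of_pos (mul_pos ha hb)]
    have hxa : |x| = a := by
      refine le_antisymm hx (le_of_not_gt fun hlt => ?_)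
      nlinarith [abs_nonneg x]
    rcases (abs_eq ha.le).1 hxa with rfl | rfl
    · exact .inl ⟨rfl, mul_left_cancel₀ ha.ne' h⟩
    · exact .inr ⟨rfl, mul_left_cancel₀ ha.ne' (by linarith)⟩
  · rintro (⟨rfl, rfl⟩ | ⟨rfl, rfl⟩) <;> ring

end Products

lemma maxReProd_eq_mul_specRadius {m m' : Type*} [Fintype m] [DecidableEq m] [Fintype m']
    [DecidableEq m'] {A : Matrix m m ℝ} {B : Matrix m' m' ℝ} (hA : A.IsSymm) (hB : B.IsSymm)
    (hρA : (specRadius A : ℂ) ∈ spectrumM A) (hρB : (specRadius B : ℂ) ∈ spectrumM B) :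
    maxReProd A B = specRadius A * specRadius B := by
  refine IsGreatest.csSup_eq ⟨⟨_, hρA, _, hρB, by simp⟩, ?_⟩
  rintro _ ⟨z, hz, w, hw, rfl⟩
  obtain ⟨x, rfl⟩ := exists_ofReal_eq_of_mem_spectrumM hA hz
  obtain ⟨y, rfl⟩ := exists_ofReal_eq_of_mem_spectrumM hB hw
  rw [← Complex.ofReal_mul, Complex.ofReal_re]
  exact mul_le_mul_of_abs_le (abs_le_specRadius hz) (abs_le_specRadius hw)

theorem stmt8 {Na No : ℕ} (hNa : 0 < Na) (hNo : 0 < No)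
    (Aa : Matrix (Fin Na) (Fin Na) ℝ) (Ao : Matrix (Fin No) (Fin No) ℝ)
    (hsa : Aa.IsSymm) (hso : Ao.IsSymm)
    (ha : ClassII Aa) (ho : ClassII Ao)
    (hssa : SignSymmetric Aa) (hsso : SignSymmetric Ao) :
    {p : ℂ × ℂ | p.1 ∈ spectrumM Aa ∧ p.2 ∈ spectrumM Ao ∧
        (p.1 * p.2).re = maxReProd Aa Ao} =
      {(((specRadius Aa : ℂ)), ((specRadius Ao : ℂ))),
        ((-(specRadius Aa : ℂ)), (-(specRadius Ao : ℂ)))} := by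
  have hρa := hssa.ofReal_specRadius_mem_spectrumM hsa hNa
  have hρo := hsso.ofReal_specRadius_mem_spectrumM hso hNo
  ext ⟨z, w⟩
  simp only [Set.mem_ofPred_eq, Set.mem_insert_iff, Set.mem_singleton_iff, Prod.mk.injEq,
    maxReProd_eq_mul_specRadius hsa hso hρa hρo]
  constructor
  · rintro ⟨hz, hw, hzw⟩
    obtain ⟨x, rfl⟩ := exists_ofReal_eq_of_mem_spectrumM hsa hz
    obtain ⟨y, rfl⟩ := exists_ofReal_eq_of_mem_spectrumM hso hw
    rw [← Complex.ofReal_mul, Complex.ofReal_re, mul_eq_mul_iff_of_abs_le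
      (ha.specRadius_pos hsa hNa) (ho.specRadius_pos hso hNo) (abs_le_specRadius hz)
      (abs_le_specRadius hw)] at hzw
    simpa only [← Complex.ofReal_neg, Complex.ofReal_inj] using hzw
  · rintro (⟨rfl, rfl⟩ | ⟨rfl, rfl⟩)
    · exact ⟨hρa, hρo, by simp⟩
    · exact ⟨hssa.neg_mem_spectrumM hρa, hsso.neg_mem_spectrumM hρo, by simp⟩
end
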